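/- arXiv:1411.4577 — 2 statements merged into one kernel-verified Lean document; each statement's English description precedes it below -/
import Mathlib

section
/- Let m ≥ 1, r ≥ 1, and k : Fin m → ℕ with 2r+1 ≤ k(i) for all i. Let T be the m-dimensional r-nearest neighbor torus, i.e., the simple graph on Π_{i} ZMod (k(i)) in which x and y are adjacent iff there is an index i with x(l) = y(l) for all l ≠ i and x(i), y(i) adjacent in C_{k(i)}^r. Then for every choice of j : Fin m → ℕ with 1 ≤ j(i) ≤ k(i)−1 for all i, the vector v(x) = exp(2πi·∑_{i} j(i)·x(i)/k(i)) is an eigenvector of the Laplacian matrix of T with eigenvalue (2r+1)m − ∑_{i=1}^{m} sin((2r+1)πj(i)/k(i)) / sin(πj(i)/k(i)). -/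
open Real Complex SimpleGraph Matrix Finset

/-- The `r`-nearest neighbor cycle `C_n^r` on `ZMod n`: distinct vertices `a, b` are adjacent
iff `a - b ≡ s (mod n)` for some `s ∈ {1,…,r} ∪ {n-r,…,n-1}`, i.e. iff `a - b = s` or
`b - a = s` in `ZMod n` for some `1 ≤ s ≤ r`. -/
def nnCycle (n r : ℕ) : SimpleGraph (ZMod n) where
  Adj a b := a ≠ b ∧ ∃ s ∈ Finset.Icc 1 r, a - b = (s : ZMod n) ∨ b - a = (s : ZMod n)
  symm := by
    constructor
    rintro a b ⟨hne, s, hs, h⟩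
    exact ⟨hne.symm, s, hs, h.symm⟩
  loopless := by constructor; rintro a ⟨h, -⟩; exact h rfl

instance nnCycle.adjDecidable (n r : ℕ) : DecidableRel (nnCycle n r).Adj := fun a b =>
  inferInstanceAs (Decidable (a ≠ b ∧ ∃ s ∈ Finset.Icc 1 r,
    a - b = (s : ZMod n) ∨ b - a = (s : ZMod n)))

/-- The `m`-dimensional `r`-nearest neighbor torus: the `m`-fold Cartesian (box) product of
the cycles `C_{k i}^r`. Two tuples are adjacent iff they agree in all but one coordinate and
differ in that coordinate by an edge of the corresponding cycle. -/
def nnTorus (m r : ℕ) (k : Fin m → ℕ) : SimpleGraph ((i : Fin m) → ZMod (k i)) where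
  Adj x y := ∃ i, (∀ l, l ≠ i → x l = y l) ∧ (nnCycle (k i) r).Adj (x i) (y i)
  symm := by
    constructor
    rintro x y ⟨i, h1, h2⟩
    exact ⟨i, fun l hl => (h1 l hl).symm, h2.symm⟩
  loopless := by
    constructor
    rintro x ⟨i, -, h2⟩
    exact h2.ne rfl

instance nnTorus.adjDecidable (m r : ℕ) (k : Fin m → ℕ) :
    DecidableRel (nnTorus m r k).Adj := fun x y =>
  inferInstanceAs (Decidable (∃ i, (∀ l, l ≠ i → x l = y l) ∧
    (nnCycle (k i) r).Adj (x i) (y i)))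

/-! The torus is a Cayley graph of the abelian group `∏ i, ZMod (k i)`: `x ~ y` iff `y - x` is
supported on a single coordinate, where it equals `±s` with `1 ≤ s ≤ r`. On a Cayley graph with
connection set `S` every additive character `ψ` is a Laplacian eigenvector with eigenvalue
`∑ s ∈ S, (1 - ψ s)`, and `v` is the product of the characters
`a ↦ exp (2πi jᵢ a / kᵢ)`.
The eigenvalue splits over the coordinates; coordinate `i` contributes
`2r - 2 ∑_{s=1}^r cos (2sθ)` with `θ = π jᵢ / kᵢ`, and the Dirichlet kernel identity
`sin θ (1 + 2 ∑_{s=1}^r cos (2sθ)) = sin ((2r+1)θ)` turns this into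
`2r + 1 - sin ((2r+1)θ) / sin θ`. -/

namespace AddChar

variable {ι : Type*} [Fintype ι] {A : ι → Type*} [∀ i, AddMonoid (A i)] {R : Type*}
  [CommMonoid R]

def pi (ψ : ∀ i, AddChar (A i) R) : AddChar (∀ i, A i) R where
  toFun x := ∏ i, ψ i (x i)
  map_zero_eq_one' := by simp
  map_add_eq_mul' x y := by simp [map_add_eq_mul, Finset.prod_mul_distrib]

lemma pi_apply (ψ : ∀ i, AddChar (A i) R) (x : ∀ i, A i) : pi ψ x = ∏ i, ψ i (x i) := rfl

lemma pi_single [DecidableEq ι] (ψ : ∀ i, AddChar (A i) R) (i : ι) (a : A i) :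
    pi ψ (Pi.single i a) = ψ i a := by
  rw [pi_apply, Fintype.prod_eq_single i fun l hl => by rw [Pi.single_eq_of_ne hl, map_zero_eq_one],
    Pi.single_eq_same]

end AddChar

lemma ZMod.stdAddChar_natCast_mul {n : ℕ} [NeZero n] (c : ℕ) (a : ZMod n) :
    ZMod.stdAddChar ((c : ZMod n) * a) =
      Complex.exp (2 * π * I * ((c : ℂ) * (a.val : ℂ) / n)) := by
  conv_lhs => rw [← ZMod.natCast_zmod_val a, ← Nat.cast_mul, ZMod.stdAddChar_apply,
    ZMod.toCircle_natCast]
  push_cast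
  ring_nf

lemma ZMod.stdAddChar_mul_add_stdAddChar_mul_neg {n : ℕ} [NeZero n] (c s : ℕ) :
    ZMod.stdAddChar ((c : ZMod n) * (s : ZMod n)) + ZMod.stdAddChar ((c : ZMod n) * -(s : ZMod n)) =
      2 * (Real.cos (2 * s * (π * c / n)) : ℂ) := by
  have h₁ : (c : ZMod n) * (s : ZMod n) = ((c * s : ℤ) : ZMod n) := by push_cast; ring
  have h₂ : (c : ZMod n) * -(s : ZMod n) = ((-(c * s) : ℤ) : ZMod n) := by push_cast; ring
  rw [h₁, h₂, ZMod.stdAddChar_coe, ZMod.stdAddChar_coe, Complex.ofReal_cos, Complex.two_cos]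
  congr 2 <;> push_cast <;> ring

lemma ZMod.natCast_ne_zero_of_pos_of_lt {n s : ℕ} (h₀ : 0 < s) (h : s < n) :
    (s : ZMod n) ≠ 0 := by
  rw [Ne, ZMod.natCast_eq_zero_iff]
  exact fun hdvd => (Nat.le_of_dvd h₀ hdvd).not_gt h

lemma sin_mul_one_add_two_mul_sum_cos (θ : ℝ) (r : ℕ) :
    Real.sin θ * (1 + 2 * ∑ s ∈ Icc 1 r, Real.cos (2 * s * θ)) =
      Real.sin ((2 * r + 1) * θ) := by
  induction r with
  | zero => simp
  | succ r ih =>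
    rw [sum_Icc_succ_top (by omega), mul_add 2, ← add_assoc, mul_add, ih]
    have h₁ : (2 * ((r + 1 : ℕ) : ℝ) + 1) * θ = 2 * (r + 1 : ℕ) * θ + θ := by ring
    have h₂ : (2 * (r : ℝ) + 1) * θ = 2 * (r + 1 : ℕ) * θ - θ := by push_cast; ring
    rw [h₁, h₂, Real.sin_add, Real.sin_sub]
    ring

lemma sin_pi_mul_div_pos {c n : ℕ} (h0 : 0 < c) (h : c < n) : 0 < Real.sin (π * c / n) := by
  have hn : (0 : ℝ) < n := by exact_mod_cast h0.trans h
  refine Real.sin_pos_of_pos_of_lt_pi (by positivity) ?_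
  rw [mul_div_assoc]
  exact mul_lt_of_lt_one_right pi_pos ((div_lt_one hn).2 (by exact_mod_cast h))

lemma Finset.sum_biUnion_image_piSingle {ι : Type*} [Fintype ι] [DecidableEq ι]
    {A : ι → Type*} [∀ i, Zero (A i)] [∀ i, DecidableEq (A i)] {S : ∀ i, Finset (A i)}
    (h0 : ∀ i, 0 ∉ S i) {R : Type*} [AddCommMonoid R] (f : (∀ i, A i) → R) :
    ∑ s ∈ univ.biUnion (fun i => (S i).image (Pi.single i)), f s =
      ∑ i, ∑ d ∈ S i, f (Pi.single i d) := by
  rw [sum_biUnion]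
  · exact sum_congr rfl fun i _ => sum_image fun _ _ _ _ h => Pi.single_injective i h
  · intro i _ l _ hil
    rw [Function.onFun, Finset.disjoint_left]
    rintro _ hs hs'
    obtain ⟨d, hd, rfl⟩ := mem_image.1 hs
    obtain ⟨d', -, h⟩ := mem_image.1 hs'
    have : d = 0 := by simpa [Pi.single_eq_of_ne hil] using (congrFun h i).symm
    exact h0 i (this ▸ hd)

namespace SimpleGraph

section Cayley

variable {A : Type*} [AddCommGroup A] [Fintype A] [DecidableEq A] {G : SimpleGraph A}
  [DecidableRel G.Adj] {S : Finset A}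

lemma neighborFinset_eq_image_add (hG : ∀ x y, G.Adj x y ↔ y - x ∈ S) (x : A) :
    G.neighborFinset x = S.image (x + ·) := by
  ext y
  simp [hG, add_comm, sub_eq_add_neg]

lemma lapMatrix_mulVec_addChar {R : Type*} [CommRing R] (hG : ∀ x y, G.Adj x y ↔ y - x ∈ S)
    (ψ : AddChar A R) : G.lapMatrix R *ᵥ ψ = (∑ s ∈ S, (1 - ψ s)) • ⇑ψ := by
  ext x
  rw [lapMatrix_mulVec_apply, ← card_neighborFinset_eq_degree, neighborFinset_eq_image_add hG,
    card_image_of_injective _ (add_right_injective x),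
    sum_image fun _ _ _ _ h => add_left_cancel h]
  simp only [AddChar.map_add_eq_mul, ← mul_sum, sum_sub_distrib, sum_const, nsmul_one,
    Pi.smul_apply, smul_eq_mul]
  ring

end Cayley

lemma exists_adj_iff_sub_mem_biUnion {ι : Type*} [Fintype ι] [DecidableEq ι] {A : ι → Type*}
    [∀ i, AddCommGroup (A i)] [∀ i, DecidableEq (A i)] {G : ∀ i, SimpleGraph (A i)}
    {S : ∀ i, Finset (A i)} (hG : ∀ i x y, (G i).Adj x y ↔ y - x ∈ S i)
    (x y : ∀ i, A i) :
    (∃ i, (∀ l, l ≠ i → x l = y l) ∧ (G i).Adj (x i) (y i)) ↔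
      y - x ∈ univ.biUnion fun i => (S i).image (Pi.single i) := by
  simp only [mem_biUnion, mem_image, mem_univ, true_and, hG]
  constructor
  · rintro ⟨i, hagree, hd⟩
    refine ⟨i, y i - x i, hd, funext fun l => ?_⟩
    by_cases hl : l = i
    · subst hl; simp
    · simp [Pi.single_eq_of_ne hl, hagree l hl]
  · rintro ⟨i, d, hd, hyx⟩
    refine ⟨i, fun l hl => ?_, by rwa [← Pi.sub_apply, ← hyx, Pi.single_eq_same]⟩
    simpa [Pi.single_eq_of_ne hl, sub_eq_zero, eq_comm] using congrFun hyx l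

end SimpleGraph

def nnCycleJumps (n r : ℕ) : Finset (ZMod n) :=
  (Icc 1 r).image (fun s : ℕ => (s : ZMod n)) ∪ (Icc 1 r).image (fun s : ℕ => -(s : ZMod n))

lemma nnCycle_adj_iff {n r : ℕ} (h : r < n) (a b : ZMod n) :
    (nnCycle n r).Adj a b ↔ b - a ∈ nnCycleJumps n r := by
  have hne : ∀ s ∈ Icc 1 r, (s : ZMod n) ≠ 0 := fun s hs =>
    ZMod.natCast_ne_zero_of_pos_of_lt (mem_Icc.1 hs).1 (by have := (mem_Icc.1 hs).2; omega)
  simp only [nnCycle, nnCycleJumps, mem_union, mem_image]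
  constructor
  · rintro ⟨-, s, hs, h | h⟩
    · exact Or.inr ⟨s, hs, by rw [← h, neg_sub]⟩
    · exact Or.inl ⟨s, hs, h.symm⟩
  · rintro (⟨s, hs, h⟩ | ⟨s, hs, h⟩)
    · exact ⟨fun hab => hne s hs (by rw [h, hab, sub_self]), s, hs, Or.inr h.symm⟩
    · exact ⟨fun hab => hne s hs (by rw [← neg_eq_zero, h, hab, sub_self]), s, hs,
        Or.inl (by rw [← neg_sub, ← h, neg_neg])⟩

lemma sum_nnCycleJumps {R : Type*} [AddCommMonoid R] {n r : ℕ} (h : 2 * r < n)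
    (f : ZMod n → R) :
    ∑ d ∈ nnCycleJumps n r, f d = ∑ s ∈ Icc 1 r, (f s + f (-s)) := by
  have hval : ∀ s ∈ Icc 1 r, (s : ZMod n).val = s := fun s hs =>
    ZMod.val_natCast_of_lt (by have := (mem_Icc.1 hs).2; omega)
  have hinj : Set.InjOn (fun s : ℕ => (s : ZMod n)) (Icc 1 r) := fun s hs s' hs' hss' => by
    rw [← hval s hs, ← hval s' hs']
    exact congrArg ZMod.val hss'
  have hinj' : Set.InjOn (fun s : ℕ => -(s : ZMod n)) (Icc 1 r) := fun s hs s' hs' hss' =>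
    hinj hs hs' (neg_injective hss')
  rw [nnCycleJumps, sum_union, sum_image hinj, sum_image hinj', sum_add_distrib]
  rw [Finset.disjoint_left]
  rintro _ hd hd'
  obtain ⟨s, hs, rfl⟩ := mem_image.1 hd
  obtain ⟨s', hs', h'⟩ := mem_image.1 hd'
  have hs := mem_Icc.1 hs
  have hs' := mem_Icc.1 hs'
  refine ZMod.natCast_ne_zero_of_pos_of_lt (n := n) (s := s' + s) (by omega) (by omega) ?_
  rw [Nat.cast_add, ← h', add_neg_cancel]

lemma sum_nnCycleJumps_one_sub_stdAddChar {n r : ℕ} [NeZero n] (h : 2 * r < n) (c : ℕ)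
    (hc : Real.sin (π * c / n) ≠ 0) :
    ∑ d ∈ nnCycleJumps n r, (1 - ZMod.stdAddChar ((c : ZMod n) * d)) =
      ((2 * r + 1 - Real.sin ((2 * r + 1) * π * c / n) / Real.sin (π * c / n) : ℝ) : ℂ) := by
  have hD : Real.sin ((2 * r + 1) * π * c / n) / Real.sin (π * c / n) =
      1 + 2 * ∑ s ∈ Icc 1 r, Real.cos (2 * s * (π * c / n)) := by
    rw [show (2 * r + 1) * π * c / n = (2 * r + 1) * (π * c / n) by ring,
      ← sin_mul_one_add_two_mul_sum_cos, mul_div_cancel_left₀ _ hc]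
  calc ∑ d ∈ nnCycleJumps n r, (1 - ZMod.stdAddChar ((c : ZMod n) * d))
      = ∑ s ∈ Icc 1 r, (2 - 2 * (Real.cos (2 * s * (π * c / n)) : ℂ)) := by
        rw [sum_nnCycleJumps h]
        refine sum_congr rfl fun s _ => ?_
        rw [← ZMod.stdAddChar_mul_add_stdAddChar_mul_neg]
        ring
    _ = ((2 * r - 2 * ∑ s ∈ Icc 1 r, Real.cos (2 * s * (π * c / n)) : ℝ) : ℂ) := by
        push_cast
        rw [sum_sub_distrib, ← mul_sum]
        simp [mul_comm]
    _ = _ := by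
        rw [hD]
        congr 1
        ring

/-- For the `m`-dimensional `r`-nearest neighbor torus with `2r+1 ≤ k i` and indices
`1 ≤ j i ≤ k i - 1`, the vector `v(x) = exp(2πi·∑ᵢ jᵢxᵢ/kᵢ)` is an eigenvector of the
Laplacian with eigenvalue `(2r+1)m - ∑ᵢ sin((2r+1)πjᵢ/kᵢ)/sin(πjᵢ/kᵢ)`. -/
theorem multitorus_laplacian_eigenvector (m r : ℕ)
    (k : Fin m → ℕ) (hk : ∀ i, 2 * r + 1 ≤ k i)
    (j : Fin m → ℕ) (hjl : ∀ i, 1 ≤ j i) (hj : ∀ i, j i ≤ k i - 1) :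
    haveI : ∀ i, NeZero (k i) := fun i => ⟨by have := hk i; omega⟩
    (nnTorus m r k).lapMatrix ℂ *ᵥ
        (fun x => Complex.exp (2 * Real.pi * Complex.I *
          ∑ i, (j i : ℂ) * ((x i).val : ℂ) / (k i : ℂ))) =
      (((2 * r + 1) * m - ∑ i, Real.sin ((2 * r + 1) * Real.pi * j i / k i) /
          Real.sin (Real.pi * j i / k i) : ℝ) : ℂ) •
        (fun x => Complex.exp (2 * Real.pi * Complex.I *
          ∑ i, (j i : ℂ) * ((x i).val : ℂ) / (k i : ℂ))) := by
  have : ∀ i, NeZero (k i) := fun i => ⟨by have := hk i; omega⟩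
  have hcycle : ∀ i x y, (nnCycle (k i) r).Adj x y ↔ y - x ∈ nnCycleJumps (k i) r :=
    fun i => nnCycle_adj_iff (by have := hk i; omega)
  have hzero : ∀ i, (0 : ZMod (k i)) ∉ nnCycleJumps (k i) r := fun i h =>
    (nnCycle (k i) r).irrefl ((hcycle i 0 0).2 (by rwa [sub_zero]))
  have hsin : ∀ i, Real.sin (π * j i / k i) ≠ 0 := fun i =>
    (sin_pi_mul_div_pos (hjl i) (by have := hj i; have := hk i; omega)).ne'
  let χ : ∀ i, AddChar (ZMod (k i)) ℂ := fun i => ZMod.stdAddChar.mulShift (j i : ZMod (k i))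
  have hv : (fun x : ∀ i, ZMod (k i) => Complex.exp (2 * Real.pi * Complex.I *
      ∑ i, (j i : ℂ) * ((x i).val : ℂ) / (k i : ℂ))) = ⇑(AddChar.pi χ) :=
    funext fun x => by
      rw [AddChar.pi_apply, mul_sum, Complex.exp_sum]
      exact prod_congr rfl fun i _ => (ZMod.stdAddChar_natCast_mul (j i) (x i)).symm
  have heig : ∀ i, ∑ d ∈ nnCycleJumps (k i) r, (1 - χ i d) =
      ((2 * r + 1 - Real.sin ((2 * r + 1) * π * j i / k i) / Real.sin (π * j i / k i) : ℝ) :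
        ℂ) :=
    fun i => sum_nnCycleJumps_one_sub_stdAddChar (by have := hk i; omega) (j i) (hsin i)
  rw [hv, lapMatrix_mulVec_addChar (exists_adj_iff_sub_mem_biUnion hcycle),
    sum_biUnion_image_piSingle hzero]
  congr 1
  simp only [AddChar.pi_single, heig]
  push_cast
  rw [sum_sub_distrib]
  simp only [sum_const, card_univ, Fintype.card_fin, nsmul_eq_mul]
  ring
end

section
/- Let r ≥ 1 and let k₁, k₂ be even integers with 2r+1 ≤ k₁ and 2r+1 ≤ k₂. The vector w : ZMod k₁ × ZMod k₂ → ℂ defined by w(x,y) = (−1)^{x+y} (well defined since k₁ and k₂ are even) is an eigenvector of the Laplacian matrix of the r-nearest neighbor torus T^r_{k₁,k₂} = C_{k₁}^r □ C_{k₂}^r with eigenvalue 4r + 2 − 2(−1)^r = 4r + 2 − 2cos(πr). -/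
/-! For even `k`, `χ a = (-1) ^ a.val` is a character of `ZMod k`. The neighbours of `a` in
`C_k^r` are the `2r` distinct points `a ± s`, `1 ≤ s ≤ r` (distinct because `2r < k`), so
`(L χ) a = ∑ (χ a - χ (a ± s)) = χ a · 2 ∑ (1 - (-1) ^ s) = (2r + 1 - (-1) ^ r) χ a`.
The Laplacian of a box product is `L_G ⊗ 1 + 1 ⊗ L_H`, so `χ ⊗ χ` is an eigenvector of the
torus Laplacian with the sum of the two cycle eigenvalues. -/

open Real Complex SimpleGraph Matrix Finset

instance boxProd.adjDecidable {α β : Type*} [DecidableEq α] [DecidableEq β]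
    (G : SimpleGraph α) (H : SimpleGraph β) [DecidableRel G.Adj] [DecidableRel H.Adj] :
    DecidableRel (G □ H).Adj := fun x y =>
  inferInstanceAs (Decidable (G.Adj x.1 y.1 ∧ x.2 = y.2 ∨ H.Adj x.2 y.2 ∧ x.1 = y.1))

section BoxProd

variable {α β R : Type*} [Fintype α] [Fintype β] [DecidableEq α] [DecidableEq β] [CommRing R]
  (G : SimpleGraph α) (H : SimpleGraph β) [DecidableRel G.Adj] [DecidableRel H.Adj]

theorem lapMatrix_boxProd_mulVec_mul (f : α → R) (g : β → R) :
    (G □ H).lapMatrix R *ᵥ (fun p => f p.1 * g p.2) =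
      fun p => (G.lapMatrix R *ᵥ f) p.1 * g p.2 + f p.1 * (H.lapMatrix R *ᵥ g) p.2 := by
  funext p
  simp only [lapMatrix_mulVec_apply, degree_boxProd, neighborFinset_boxProd, sum_disjUnion,
    sum_product, sum_singleton, ← sum_mul, ← mul_sum]
  push_cast
  ring

theorem lapMatrix_boxProd_mulVec_mul_of_eq_smul {f : α → R} {g : β → R} {a b : R}
    (hf : G.lapMatrix R *ᵥ f = a • f) (hg : H.lapMatrix R *ᵥ g = b • g) :
    (G □ H).lapMatrix R *ᵥ (fun p => f p.1 * g p.2) = (a + b) • fun p => f p.1 * g p.2 := by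
  rw [lapMatrix_boxProd_mulVec_mul, hf, hg]
  funext p
  simp only [Pi.smul_apply, smul_eq_mul]
  ring

end BoxProd

theorem SimpleGraph.lapMatrix_mulVec_apply_eq_sum_sub {V R : Type*} [Fintype V] [DecidableEq V]
    [NonAssocRing R] (G : SimpleGraph V) [DecidableRel G.Adj] (v : V) (x : V → R) :
    (G.lapMatrix R *ᵥ x) v = ∑ u ∈ G.neighborFinset v, (x v - x u) := by
  rw [lapMatrix_mulVec_apply, sum_sub_distrib, sum_const, card_neighborFinset_eq_degree,
    nsmul_eq_mul]

theorem neg_one_pow_mod_of_even {R : Type*} [Ring R] {k : ℕ} (hk : Even k) (n : ℕ) :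
    (-1 : R) ^ (n % k) = (-1) ^ n := by
  rw [neg_one_pow_eq_pow_mod_two, neg_one_pow_eq_pow_mod_two (R := R) n,
    Nat.mod_mod_of_dvd _ hk.two_dvd]

theorem two_mul_sum_Icc_one_sub_neg_one_pow {R : Type*} [CommRing R] (r : ℕ) :
    2 * ∑ s ∈ Icc 1 r, (1 - (-1 : R) ^ s) = 2 * r + 1 - (-1) ^ r := by
  induction r with
  | zero => simp
  | succ r ih =>
    rw [sum_Icc_succ_top (by omega), mul_add, ih, pow_succ]
    push_cast
    ring

namespace ZMod

variable {R : Type*} [Ring R] {k : ℕ}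

theorem neg_one_pow_val_natCast (hk : Even k) (n : ℕ) :
    (-1 : R) ^ (n : ZMod k).val = (-1) ^ n := by
  rw [val_natCast, neg_one_pow_mod_of_even hk]

theorem natCast_injOn_Iio : Set.InjOn (fun n : ℕ => (n : ZMod k)) (Set.Iio k) := by
  intro m hm n hn h
  simpa [natCast_eq_natCast_iff', Nat.mod_eq_of_lt hm, Nat.mod_eq_of_lt hn] using h

theorem natCast_ne_zero_of_pos_of_lt_s15 {n : ℕ} (h0 : 0 < n) (hk : n < k) : (n : ZMod k) ≠ 0 := by
  rw [Ne, natCast_eq_zero_iff]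
  exact fun h => (Nat.eq_zero_of_dvd_of_lt h hk).not_gt h0

variable [NeZero k]

theorem neg_one_pow_val_add (hk : Even k) (a b : ZMod k) :
    (-1 : R) ^ (a + b).val = (-1) ^ a.val * (-1) ^ b.val := by
  rw [val_add, neg_one_pow_mod_of_even hk, pow_add]

theorem neg_one_pow_val_neg (hk : Even k) (a : ZMod k) :
    (-1 : R) ^ (-a).val = (-1) ^ a.val := by
  calc (-1 : R) ^ (-a).val = (-1) ^ (-a + a).val * (-1) ^ a.val := by
        rw [neg_one_pow_val_add hk, mul_assoc, ← pow_add, ← two_mul, pow_mul, neg_one_sq,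
          one_pow, mul_one]
    _ = (-1) ^ a.val := by rw [neg_add_cancel, val_zero, pow_zero, one_mul]

theorem neg_one_pow_val_sub (hk : Even k) (a b : ZMod k) :
    (-1 : R) ^ (a - b).val = (-1) ^ a.val * (-1) ^ b.val := by
  rw [sub_eq_add_neg, neg_one_pow_val_add hk, neg_one_pow_val_neg hk]

end ZMod

namespace nnCycle

variable {k r : ℕ}

theorem injOn_add_natCast (h : r < k) (a : ZMod k) :
    Set.InjOn (fun s : ℕ => a + s) (Icc 1 r) := fun _ hs _ ht hst =>
  ZMod.natCast_injOn_Iio ((mem_Icc.mp hs).2.trans_lt h) ((mem_Icc.mp ht).2.trans_lt h)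
    (add_left_cancel hst)

theorem injOn_sub_natCast (h : r < k) (a : ZMod k) :
    Set.InjOn (fun s : ℕ => a - s) (Icc 1 r) := fun _ hs _ ht hst =>
  ZMod.natCast_injOn_Iio ((mem_Icc.mp hs).2.trans_lt h) ((mem_Icc.mp ht).2.trans_lt h)
    (sub_right_injective hst)

theorem disjoint_image_add_image_sub (h : 2 * r < k) (a : ZMod k) :
    Disjoint ((Icc 1 r).image (fun s : ℕ => a + s)) ((Icc 1 r).image (fun s : ℕ => a - s)) := by
  simp only [Finset.disjoint_left, mem_image, mem_Icc, not_exists, not_and]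
  rintro _ ⟨s, hs, rfl⟩ t ht hst
  refine ZMod.natCast_ne_zero_of_pos_of_lt_s15 (k := k) (n := s + t) (by omega) (by omega) ?_
  push_cast
  linear_combination -hst

variable [NeZero k]

theorem neighborFinset_eq (h : r < k) (a : ZMod k) :
    (nnCycle k r).neighborFinset a =
      (Icc 1 r).image (fun s : ℕ => a + s) ∪ (Icc 1 r).image (fun s : ℕ => a - s) := by
  ext b
  simp only [mem_neighborFinset, mem_union, mem_image, mem_Icc]
  constructor
  · rintro ⟨-, s, hs, hab | hba⟩
    · exact Or.inr ⟨s, mem_Icc.mp hs, by rw [← hab]; ring⟩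
    · exact Or.inl ⟨s, mem_Icc.mp hs, by rw [← hba]; ring⟩
  · rintro (⟨s, hs, rfl⟩ | ⟨s, hs, rfl⟩)
    · refine ⟨fun he => ZMod.natCast_ne_zero_of_pos_of_lt_s15 (k := k) hs.1 (by omega) ?_, s,
        mem_Icc.mpr hs, Or.inr (by ring)⟩
      linear_combination -he
    · refine ⟨fun he => ZMod.natCast_ne_zero_of_pos_of_lt_s15 (k := k) hs.1 (by omega) ?_, s,
        mem_Icc.mpr hs, Or.inl (by ring)⟩
      linear_combination he

theorem lapMatrix_mulVec_neg_one_pow_val {R : Type*} [CommRing R] (hk : Even k)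
    (h : 2 * r < k) :
    (nnCycle k r).lapMatrix R *ᵥ (fun a : ZMod k => (-1 : R) ^ a.val) =
      (2 * r + 1 - (-1) ^ r : R) • fun a : ZMod k => (-1 : R) ^ a.val := by
  funext a
  rw [lapMatrix_mulVec_apply_eq_sum_sub, neighborFinset_eq (by omega),
    sum_union (disjoint_image_add_image_sub h a), sum_image (injOn_add_natCast (by omega) a),
    sum_image (injOn_sub_natCast (by omega) a), Pi.smul_apply, smul_eq_mul,
    ← two_mul_sum_Icc_one_sub_neg_one_pow]
  simp only [ZMod.neg_one_pow_val_add hk, ZMod.neg_one_pow_val_sub hk,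
    ZMod.neg_one_pow_val_natCast hk, ← mul_one_sub, ← mul_sum]
  ring

end nnCycle

/-- For `r ≥ 1` and even `k₁, k₂` with `2r+1 ≤ k₁, k₂`, the vector `w(x,y) = (-1)^{x+y}` is
an eigenvector of the Laplacian of the torus `C_{k₁}ʳ □ C_{k₂}ʳ` with eigenvalue
`4r + 2 - 2(-1)^r = 4r + 2 - 2cos(πr)`. -/
theorem torus_laplacian_alternating_eigenvector (r k₁ k₂ : ℕ)
    (he₁ : Even k₁) (he₂ : Even k₂) (h₁ : 2 * r + 1 ≤ k₁) (h₂ : 2 * r + 1 ≤ k₂) :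
    haveI : NeZero k₁ := ⟨by omega⟩
    haveI : NeZero k₂ := ⟨by omega⟩
    (4 * (r : ℝ) + 2 - 2 * (-1 : ℝ) ^ r = 4 * r + 2 - 2 * Real.cos (Real.pi * r)) ∧
    (nnCycle k₁ r □ nnCycle k₂ r).lapMatrix ℂ *ᵥ
        (fun p : ZMod k₁ × ZMod k₂ => (-1 : ℂ) ^ (p.1.val + p.2.val)) =
      ((4 * r + 2 - 2 * (-1 : ℝ) ^ r : ℝ) : ℂ) •
        (fun p : ZMod k₁ × ZMod k₂ => (-1 : ℂ) ^ (p.1.val + p.2.val)) := by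
  have : NeZero k₁ := ⟨by omega⟩
  have : NeZero k₂ := ⟨by omega⟩
  refine ⟨by rw [mul_comm Real.pi, Real.cos_nat_mul_pi], ?_⟩
  have hw : (fun p : ZMod k₁ × ZMod k₂ => (-1 : ℂ) ^ (p.1.val + p.2.val)) =
      fun p => (-1) ^ p.1.val * (-1) ^ p.2.val := by
    simp only [pow_add]
  have hμ : ((4 * r + 2 - 2 * (-1 : ℝ) ^ r : ℝ) : ℂ) =
      (2 * r + 1 - (-1) ^ r) + (2 * r + 1 - (-1) ^ r) := by
    push_cast
    ring
  rw [hw, hμ]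
  have hχ₁ := nnCycle.lapMatrix_mulVec_neg_one_pow_val (R := ℂ) (r := r) he₁ (by omega)
  have hχ₂ := nnCycle.lapMatrix_mulVec_neg_one_pow_val (R := ℂ) (r := r) he₂ (by omega)
  exact (lapMatrix_boxProd_mulVec_mul_of_eq_smul _ _ hχ₁ hχ₂ :)
end
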